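/- arXiv:2312.07134 — 7 statements merged into one kernel-verified Lean document; each statement's English description precedes it below -/
import Mathlib

section
/- For all primes p ≥ 5 and integers s ≥ 0, the rational number Σ'_{x=1}^{p^s−1} (−1)^x / x², where Σ' denotes the sum over those x in the range not divisible by p, has p-adic valuation at least s (i.e., it is congruent to 0 modulo p^s as a p-integral rational number). -/
lemma my_sum_val {p : ℕ} [Fact p.Prime] {α : Type*} {S : Finset α} {F : α → ℚ} {t : ℤ}
    (h : ∀ i ∈ S, F i = 0 ∨ t ≤ padicValRat p (F i)) :
    (∑ i ∈ S, F i) = 0 ∨ t ≤ padicValRat p (∑ i ∈ S, F i) := by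
  induction S using Finset.cons_induction with
  | empty => left; simp
  | cons a s ha ih =>
    rw [Finset.sum_cons]
    have hFa := h a (by simp)
    have hrest := ih (fun i hi => h i (by simp [hi]))
    rcases hFa with h0 | hva
    · rw [h0, zero_add]; exact hrest
    rcases hrest with h0 | hvs
    · rw [h0, add_zero]; right; exact hva
    by_cases hz : F a + ∑ i ∈ s, F i = 0
    · left; exact hz
    right
    calc t ≤ min (padicValRat p (F a)) (padicValRat p (∑ i ∈ s, F i)) := le_min hva hvs
      _ ≤ _ := padicValRat.min_le_padicValRat_add hz

/-- For primes `p ≥ 5` and `s ≥ 0`, the sum `Σ'_{x=1}^{p^s−1} (−1)^x/x²` over `x` not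
divisible by `p` is `≡ 0 (mod p^s)` as a `p`-integral rational number. -/
theorem alternating_harmonic_sum (p s : ℕ) (hp : p.Prime) (hp5 : 5 ≤ p) :
    (∑ x ∈ (Finset.Ico 1 (p ^ s)).filter (fun x => ¬ p ∣ x),
        ((-1 : ℚ)) ^ x / (x : ℚ) ^ 2) = 0 ∨
      (s : ℤ) ≤ padicValRat p
        (∑ x ∈ (Finset.Ico 1 (p ^ s)).filter (fun x => ¬ p ∣ x),
          ((-1 : ℚ)) ^ x / (x : ℚ) ^ 2) := by
  haveI : Fact p.Prime := ⟨hp⟩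
  rcases Nat.eq_zero_or_pos s with hs | hs
  · left; subst hs; simp
  set N := p ^ s with hN
  set T := (Finset.Ico 1 N).filter (fun x => ¬ p ∣ x) with hT
  set f : ℕ → ℚ := fun x => ((-1 : ℚ)) ^ x / (x : ℚ) ^ 2 with hf
  set S : ℚ := ∑ x ∈ T, f x with hSdef
  by_cases hS0 : S = 0
  · left; exact hS0
  right
  have hpodd : Odd p := hp.odd_of_ne_two (by omega)
  have hNodd : Odd N := hpodd.pow
  have hpdvdN : p ∣ N := dvd_pow_self p (by omega)
  have hN1 : 1 < N := Nat.one_lt_pow (by omega) (by omega)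
  -- membership characterization
  have hmem : ∀ x, x ∈ T ↔ 1 ≤ x ∧ x < N ∧ ¬ p ∣ x := by
    intro x; simp [hT, Finset.mem_filter, Finset.mem_Ico, and_assoc]
  have hmaps : ∀ x ∈ T, N - x ∈ T := by
    intro x hx
    rw [hmem] at hx ⊢
    obtain ⟨h1, h2, h3⟩ := hx
    refine ⟨by omega, by omega, ?_⟩
    intro hdvd
    have hdd : p ∣ N - (N - x) := Nat.dvd_sub hpdvdN hdvd
    rw [Nat.sub_sub_self (by omega)] at hdd
    exact h3 hdd
  have hinv : ∀ x ∈ T, N - (N - x) = x := by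
    intro x hx; rw [hmem] at hx; omega
  -- reindexed sum
  have hre : S = ∑ x ∈ T, f (N - x) :=
    Finset.sum_nbij' (fun x => N - x) (fun x => N - x) hmaps hmaps hinv hinv
      (fun x hx => by rw [hinv x hx])
  have h2S : S + S = ∑ x ∈ T, (f x + f (N - x)) := by
    rw [Finset.sum_add_distrib, ← hSdef, ← hre]
  -- valuation of each pair term
  have hpair : ∀ x ∈ T, (f x + f (N - x)) = 0 ∨
      (s : ℤ) ≤ padicValRat p (f x + f (N - x)) := by
    intro x hx
    rw [hmem] at hx
    obtain ⟨h1, h2, h3⟩ := hx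
    right
    have hxNk : ¬ p ∣ (N - x) := by
      have := hmaps x (by rw [hmem]; exact ⟨h1, h2, h3⟩)
      rw [hmem] at this; exact this.2.2
    -- rewrite pair as integer / nat
    set m : ℤ := (-1) ^ x * (N : ℤ) * ((N : ℤ) - 2 * x) with hm
    set d : ℕ := (x * (N - x)) ^ 2 with hd
    have hxQ : (x : ℚ) ≠ 0 := by positivity
    have hbQ : ((N : ℚ) - (x : ℚ)) ≠ 0 := by
      have : (x : ℚ) < (N : ℚ) := by exact_mod_cast h2
      linarith
    have hsign : ((-1 : ℚ)) ^ (N - x) = -(-1) ^ x := by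
      have hsum : ((-1 : ℚ)) ^ (N - x) * (-1) ^ x = (-1) ^ N := by
        rw [← pow_add, Nat.sub_add_cancel (by omega)]
      have hNn : ((-1 : ℚ)) ^ N = -1 := hNodd.neg_one_pow
      rcases Nat.even_or_odd x with he | ho
      · rw [he.neg_one_pow] at hsum ⊢
        simpa [hNn] using hsum
      · rw [ho.neg_one_pow] at hsum ⊢
        have := hsum
        rw [hNn] at this
        linarith [this]
    have hcast : ((N - x : ℕ) : ℚ) = (N : ℚ) - (x : ℚ) := by
      push_cast [Nat.cast_sub (by omega : x ≤ N)]; ring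
    have heq : f x + f (N - x) = (m : ℚ) / (d : ℚ) := by
      rw [hf]
      simp only
      rw [hcast, hsign, hm, hd]
      push_cast [Nat.cast_sub (by omega : x ≤ N)]
      field_simp
      ring
    have hm0 : m ≠ 0 := by
      have : (N : ℤ) - 2 * x ≠ 0 := by
        intro h
        have : N = 2 * x := by omega
        exact (Nat.not_odd_iff_even.mpr ⟨x, by omega⟩) hNodd
      simp [hm, this]
      omega
    have hdpos : 0 < d := by
      rw [hd]
      exact pow_pos (Nat.mul_pos (by omega) (by omega)) 2
    have hd0 : (d : ℚ) ≠ 0 := by exact_mod_cast hdpos.ne'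
    have hdnd : ¬ p ∣ d := by
      rw [hd]
      intro hdvd
      rcases (Nat.Prime.dvd_mul hp).mp (hp.dvd_of_dvd_pow hdvd) with h | h
      · exact h3 h
      · exact hxNk h
    rw [heq, padicValRat.div (by exact_mod_cast hm0) hd0]
    have hvd : padicValRat p (d : ℚ) = 0 := by
      rw [padicValRat.of_nat]
      norm_cast
      exact padicValNat.eq_zero_of_not_dvd hdnd
    rw [hvd, sub_zero]
    have hk0 : ((-1 : ℤ)) ^ x * ((N : ℤ) - 2 * x) ≠ 0 := by
      have : (N : ℤ) - 2 * x ≠ 0 := by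
        intro h
        exact (Nat.not_odd_iff_even.mpr ⟨x, by omega⟩) hNodd
      exact mul_ne_zero (pow_ne_zero x (by norm_num)) this
    have hmeq : m = (N : ℤ) * ((-1) ^ x * ((N : ℤ) - 2 * x)) := by rw [hm]; ring
    rw [padicValRat.of_int, hmeq, padicValInt.mul (by positivity) hk0,
      padicValInt.of_nat, hN, padicValNat.prime_pow]
    push_cast
    omega
  have := my_sum_val (p := p) (S := T) (F := fun x => f x + f (N - x)) (t := (s : ℤ)) hpair
  rw [← h2S] at this
  have h2S0 : S + S ≠ 0 := by
    intro h; apply hS0; linarith [h]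
  rcases this with h | h
  · exact absurd h h2S0
  have hSS : S + S = 2 * S := by ring
  rw [hSS] at h
  have hv2 : padicValRat p 2 = 0 := by
    rw [show (2 : ℚ) = ((2 : ℕ) : ℚ) by norm_num, padicValRat.of_nat]
    norm_cast
    refine padicValNat.eq_zero_of_not_dvd (fun h => ?_)
    have := Nat.le_of_dvd (by norm_num) h
    omega
  rw [padicValRat.mul (by norm_num) hS0, hv2, zero_add] at h
  exact h
end

section
/- For all primes p and all integers m ≥ 1, k ≥ 0 and s ≥ 1, one has (−1)^k · binom(m·p^s − 1, k) ≡ (−1)^{⌊k/p⌋} · binom(m·p^{s−1} − 1, ⌊k/p⌋) (mod p^s). -/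
/-- Product of integers `t ∈ [1,k]` not divisible by `p`. -/
def Df (p : ℕ) : ℕ → ℕ
  | 0 => 1
  | k+1 => if p ∣ (k+1) then Df p k else (k+1) * Df p k

lemma Df_succ (p k : ℕ) : Df p (k+1) = if p ∣ (k+1) then Df p k else (k+1) * Df p k := rfl

lemma Df_not_dvd (p : ℕ) (hp : p.Prime) : ∀ k, ¬ p ∣ Df p k
  | 0 => by simpa [Df] using hp.one_lt.ne'
  | k+1 => by
      rw [Df_succ]
      by_cases h : p ∣ (k+1)
      · simpa [h] using Df_not_dvd p hp k
      · simp only [h, if_false]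
        intro hdvd
        rcases (hp.dvd_mul.mp hdvd) with h1 | h1
        · exact h h1
        · exact Df_not_dvd p hp k h1

def Af (N : ℕ) (k : ℕ) : ℤ := (-1)^k * (Nat.choose (N-1) k : ℤ)

lemma choose_rel (n k : ℕ) :
    ((k:ℤ)+1) * (Nat.choose n (k+1) : ℤ) = ((n:ℤ) - k) * (Nat.choose n k : ℤ) := by
  rcases le_or_gt k n with h1 | h1
  · have h := Nat.choose_succ_right_eq n k
    have h2 : ((n - k : ℕ) : ℤ) = (n:ℤ) - k := by omega
    have h3 : (Nat.choose n (k+1) * (k+1) : ℤ) = (Nat.choose n k : ℤ) * ((n-k:ℕ):ℤ) := by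
      exact_mod_cast congrArg (Nat.cast : ℕ → ℤ) h
    rw [h2] at h3
    linarith
  · rw [Nat.choose_eq_zero_of_lt h1, Nat.choose_eq_zero_of_lt (by omega : n < k+1)]
    simp

lemma Af_rel (N k : ℕ) (hN : 1 ≤ N) :
    ((k:ℤ)+1) * Af N (k+1) = ((k:ℤ)+1 - N) * Af N k := by
  unfold Af
  have h := choose_rel (N-1) k
  have h2 : ((N-1:ℕ):ℤ) = (N:ℤ) - 1 := by omega
  rw [h2] at h
  rw [pow_succ]
  linear_combination (-(-1:ℤ)^k) * h

lemma key_lemma (p m s : ℕ) (hp : p.Prime) (hm : 1 ≤ m) (hs : 1 ≤ s) (k : ℕ) :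
    ∃ c : ℤ, Af (m*p^s) k * (Df p k : ℤ) =
      Af (m*p^(s-1)) (k/p) * ((Df p k : ℤ) + (p:ℤ)^s * c) := by
  have hppos : 0 < p := hp.pos
  have hN : 1 ≤ m * p^s := Nat.one_le_iff_ne_zero.mpr (by positivity)
  have hN' : 1 ≤ m * p^(s-1) := Nat.one_le_iff_ne_zero.mpr (by positivity)
  have hps : (p:ℤ)^s = (p:ℤ) * (p:ℤ)^(s-1) := by
    conv_lhs => rw [show s = 1 + (s-1) by omega]
    rw [pow_add, pow_one]
  have hN'cast : ((m*p^(s-1):ℕ):ℤ) = (m:ℤ)*(p:ℤ)^(s-1) := by push_cast; ring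
  induction k with
  | zero => exact ⟨0, by simp [Af, Df]⟩
  | succ k ih =>
    obtain ⟨c, hc⟩ := ih
    have r1 : ((k:ℤ)+1) * Af (m*p^s) (k+1) = ((k:ℤ)+1 - (m*p^s : ℕ)) * Af (m*p^s) k :=
      Af_rel (m*p^s) k hN
    by_cases hd : p ∣ (k+1)
    · obtain ⟨u, hu⟩ := hd
      have hu1 : 1 ≤ u := by
        rcases Nat.eq_zero_or_pos u with h | h
        · rw [h, mul_zero] at hu; omega
        · exact h
      have hdiv : (k+1)/p = u := by rw [hu]; exact Nat.mul_div_cancel_left u hppos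
      have hkp : k/p = u - 1 := by
        have h1 : (k+1)/p = k/p + 1 := Nat.succ_div_of_dvd ⟨u, hu⟩
        have h3 : k/p + 1 = u := by rw [← h1, hdiv]
        omega
      have hDf : Df p (k+1) = Df p k := by rw [Df_succ, if_pos ⟨u, hu⟩]
      have hku : ((k:ℤ)+1) = (p:ℤ) * u := by exact_mod_cast congrArg (Nat.cast : ℕ → ℤ) hu
      have hNcast : ((m*p^s : ℕ) : ℤ) = (p:ℤ) * ((m:ℤ) * (p:ℤ)^(s-1)) := by
        push_cast; rw [hps]; ring
      have r1' : (u:ℤ) * Af (m*p^s) (k+1) = ((u:ℤ) - (m:ℤ)*(p:ℤ)^(s-1)) * Af (m*p^s) k := by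
        have hp0 : (p:ℤ) ≠ 0 := by exact_mod_cast hppos.ne'
        apply mul_left_cancel₀ hp0
        rw [hku, hNcast] at r1
        linear_combination r1
      have r2 : (u:ℤ) * Af (m*p^(s-1)) u
          = ((u:ℤ) - (m:ℤ)*(p:ℤ)^(s-1)) * Af (m*p^(s-1)) (u-1) := by
        have h := Af_rel (m*p^(s-1)) (u-1) hN'
        rw [show u-1+1 = u from by omega] at h
        have h2 : (((u-1:ℕ)):ℤ) = (u:ℤ) - 1 := by omega
        rw [h2, hN'cast] at h
        linear_combination h
      refine ⟨c, ?_⟩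
      rw [hkp] at hc
      rw [hDf, hdiv]
      have hu0 : (u:ℤ) ≠ 0 := by exact_mod_cast Nat.one_le_iff_ne_zero.mp hu1
      apply mul_left_cancel₀ hu0
      calc (u:ℤ) * (Af (m*p^s) (k+1) * (Df p k : ℤ))
          = ((u:ℤ) - (m:ℤ)*(p:ℤ)^(s-1)) * (Af (m*p^s) k * (Df p k : ℤ)) := by
            rw [← mul_assoc, r1']; ring
        _ = ((u:ℤ) - (m:ℤ)*(p:ℤ)^(s-1)) *
              (Af (m*p^(s-1)) (u-1) * ((Df p k : ℤ) + (p:ℤ)^s * c)) := by rw [hc]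
        _ = (u:ℤ) * (Af (m*p^(s-1)) u * ((Df p k : ℤ) + (p:ℤ)^s * c)) := by
            linear_combination (-((Df p k : ℤ) + (p:ℤ)^s * c)) * r2
    · have hDf : Df p (k+1) = (k+1) * Df p k := by rw [Df_succ, if_neg hd]
      have hdiv : (k+1)/p = k/p := by
        simp [Nat.succ_div, hd]
      refine ⟨((k:ℤ)+1)*c - (m:ℤ) * (Df p k : ℤ) - (m:ℤ) * (p:ℤ)^s * c, ?_⟩
      rw [hDf, hdiv]
      push_cast
      have hNcast : ((m*p^s : ℕ) : ℤ) = (m:ℤ) * (p:ℤ)^s := by push_cast; ring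
      rw [hNcast] at r1
      linear_combination (Df p k : ℤ) * r1 + ((k:ℤ)+1 - (m:ℤ)*(p:ℤ)^s) * hc

/-- For primes `p`, integers `m ≥ 1`, `k ≥ 0` and `s ≥ 1`,
`(−1)^k · binom(m·p^s − 1, k) ≡ (−1)^{⌊k/p⌋} · binom(m·p^{s−1} − 1, ⌊k/p⌋) (mod p^s)`. -/
theorem choose_floor_congruence (p m k s : ℕ) (hp : p.Prime) (hm : 1 ≤ m) (hs : 1 ≤ s) :
    (p : ℤ) ^ s ∣ (-1) ^ k * (Nat.choose (m * p ^ s - 1) k : ℤ) -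
      (-1) ^ (k / p) * (Nat.choose (m * p ^ (s - 1) - 1) (k / p) : ℤ) := by
  obtain ⟨c, hc⟩ := key_lemma p m s hp hm hs k
  have hD : ¬ p ∣ Df p k := Df_not_dvd p hp k
  have hdvd : (p:ℤ)^s ∣ (Af (m*p^s) k - Af (m*p^(s-1)) (k/p)) * (Df p k : ℤ) := by
    refine ⟨Af (m*p^(s-1)) (k/p) * c, ?_⟩
    linear_combination hc
  have hcop : IsCoprime ((p:ℤ)^s) ((Df p k : ℕ) : ℤ) := by
    have h1 : Nat.Coprime p (Df p k) := hp.coprime_iff_not_dvd.mpr hD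
    have h2 : Nat.Coprime (p^s) (Df p k) := Nat.Coprime.pow_left s h1
    have h3 := Nat.isCoprime_iff_coprime.mpr h2
    push_cast at h3
    exact h3
  have hfin := hcop.dvd_of_dvd_mul_right hdvd
  simpa [Af] using hfin
end

section
/- For all primes p and all integers m ≥ 1, k ≥ 0, s ≥ 1 and 0 ≤ ℓ ≤ m·p^s, one has binom(m·p^s − ℓ, k·p^s) ≡ binom(m·p^{s−1} − ⌈ℓ/p⌉, k·p^{s−1}) (mod p^s). -/
/-!
The theorem is the case `q = m p^(s-1) - ⌈ℓ/p⌉`, `r = p ⌈ℓ/p⌉ - ℓ < p` of the congruence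
`binom(p q + r, p K) ≡ binom(q, K) (mod p^(s+1))` for `K = k p^s` (with `s - 1` for `s`).
Write `q = p^s a + b` with `b < p^s`. Since `(X + 1)^(p^(s+1)) ≡ (X^p + 1)^(p^s) (mod p^(s+1))`,
the coefficient of `X^(p K)` in `(X + 1)^(p q + r)` is congruent to
`∑ j, binom(p^s a, K - j) binom(p b + r, p j)`,
while `binom(q, K) = ∑ j, binom(p^s a, K - j) binom(b, j)`.
The terms with `j = 0` or `j ≥ p^s` agree; for `0 < j < p^s` with `v_p(j) = t`, `p^(s-t)`
divides `binom(p^s a, K - j)` and, by induction on `s`, `p^(t+1)` divides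
`binom(p b + r, p j) - binom(b, j)`.
-/

open Polynomial

theorem prime_pow_succ_dvd_add_pow_sub {R : Type*} [CommRing R] {p : ℕ} (hp : p.Prime)
    (x y : R) (s : ℕ) :
    (p : R) ^ (s + 1) ∣ (x + y) ^ p ^ (s + 1) - (x ^ p + y ^ p) ^ p ^ s := by
  obtain ⟨r, hr⟩ := exists_add_pow_prime_eq hp x y
  have h : (p : R) ∣ (x + y) ^ p - (x ^ p + y ^ p) := ⟨x * y * r, by rw [hr]; ring⟩
  simpa only [pow_succ', pow_mul] using dvd_sub_pow_of_dvd_sub h s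

theorem coeff_X_pow_add_one_pow_mul {R : Type*} [CommSemiring R] (A : R[X]) (p N n : ℕ) :
    ((X ^ p + 1) ^ N * A).coeff n =
      ∑ i ∈ Finset.range (N + 1),
        (N.choose i : R) * if p * i ≤ n then A.coeff (n - p * i) else 0 := by
  rw [add_pow, Finset.sum_mul, finsetSum_coeff]
  refine Finset.sum_congr rfl fun i _ => ?_
  rw [one_pow, mul_one, ← pow_mul, ← C_eq_natCast, mul_comm (X ^ _), mul_assoc, coeff_C_mul,
    coeff_X_pow_mul']

theorem Nat.Prime.pow_sub_dvd_choose {p s t N u : ℕ} (hp : p.Prime) (hN : p ^ s ∣ N)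
    (hu : ¬p ∣ u) : p ^ (s - t) ∣ N.choose (p ^ t * u) := by
  rcases le_or_gt s t with hst | hts
  · simp [Nat.sub_eq_zero_of_le hst]
  obtain ⟨m, hm⟩ : ∃ m, p ^ t * u = m + 1 :=
    Nat.exists_eq_add_one.2 <|
      Nat.mul_pos (pow_pos hp.pos t) (Nat.pos_of_ne_zero (by rintro rfl; simp at hu))
  rcases N with _ | N
  · simp [hm]
  have hmul : p ^ s ∣ (N + 1).choose (p ^ t * u) * p ^ t * u := by
    rw [mul_assoc, hm, ← Nat.add_one_mul_choose_eq]
    exact hN.mul_right _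
  rw [← Nat.pow_sub_mul_pow p hts.le, mul_right_comm] at hmul
  exact (Nat.Coprime.pow_left _ (hp.coprime_iff_not_dvd.2 hu)).dvd_of_dvd_mul_right
    (Nat.dvd_of_mul_dvd_mul_right (pow_pos hp.pos t) hmul)

theorem Nat.Prime.pow_sub_dvd_choose_mul_pow_sub {p s t N k u : ℕ} (hp : p.Prime)
    (hN : p ^ s ∣ N) (hu : ¬p ∣ u) (ht : t < s) (hle : p ^ t * u ≤ k * p ^ s) :
    p ^ (s - t) ∣ N.choose (k * p ^ s - p ^ t * u) := by
  have hps : p ^ s = p ^ t * p ^ (s - t) := by rw [← pow_add, Nat.add_sub_cancel' ht.le]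
  have hle' : u ≤ k * p ^ (s - t) := by
    rw [hps, mul_left_comm] at hle
    exact Nat.le_of_mul_le_mul_left hle (pow_pos hp.pos t)
  have hndvd : ¬p ∣ k * p ^ (s - t) - u := fun h => hu <| by
    have hk : p ∣ k * p ^ (s - t) := (dvd_pow_self p (Nat.sub_ne_zero_of_lt ht)).mul_left k
    simpa [Nat.sub_sub_self hle'] using Nat.dvd_sub hk h
  rw [hps, mul_left_comm, ← Nat.mul_sub]
  exact hp.pow_sub_dvd_choose hN hndvd

theorem prime_pow_succ_dvd_choose_mul_choose_sub_choose {p s N k b r j : ℕ} (hp : p.Prime)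
    (hN : p ^ s ∣ N) (hb : b < p ^ s) (hr : r < p) (hj : j ≤ k * p ^ s)
    (ih : ∀ t < s, ∀ u, (p : ℤ) ^ (t + 1) ∣
      ((p * b + r).choose (u * p ^ (t + 1)) : ℤ) - (b.choose (u * p ^ t) : ℤ)) :
    (p : ℤ) ^ (s + 1) ∣
      (N.choose (k * p ^ s - j) : ℤ) *
        (((p * b + r).choose (p * j) : ℤ) - (b.choose j : ℤ)) := by
  rcases Nat.eq_zero_or_pos j with rfl | hj0
  · simp
  rcases le_or_gt (p ^ s) j with hsj | hjs
  · have h1 : b.choose j = 0 := Nat.choose_eq_zero_of_lt (by omega)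
    have h2 : (p * b + r).choose (p * j) = 0 := Nat.choose_eq_zero_of_lt (by nlinarith)
    simp [h1, h2]
  obtain ⟨t, u, hu, rfl⟩ := Nat.exists_eq_pow_mul_and_not_dvd hj0.ne' p hp.ne_one
  have ht : t < s := (Nat.pow_lt_pow_iff_right hp.one_lt).1 <|
    (Nat.le_mul_of_pos_right _ (Nat.pos_of_ne_zero (by rintro rfl; simp at hu))).trans_lt hjs
  have hpow : (p : ℤ) ^ (s + 1) = ((p ^ (s - t) : ℕ) : ℤ) * (p : ℤ) ^ (t + 1) := by
    rw [Nat.cast_pow, ← pow_add]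
    congr 1
    omega
  rw [hpow, show p * (p ^ t * u) = u * p ^ (t + 1) by ring,
    show b.choose (p ^ t * u) = b.choose (u * p ^ t) by rw [mul_comm]]
  exact mul_dvd_mul (Int.natCast_dvd_natCast.2 (hp.pow_sub_dvd_choose_mul_pow_sub hN hu ht hj))
    (ih t ht u)

theorem prime_pow_succ_dvd_choose_mul_add_sub_choose {p : ℕ} (hp : p.Prime) (s k q r : ℕ)
    (hr : r < p) :
    (p : ℤ) ^ (s + 1) ∣
      ((p * q + r).choose (k * p ^ (s + 1)) : ℤ) - (q.choose (k * p ^ s) : ℤ) := by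
  induction s using Nat.strong_induction_on generalizing k q r with
  | _ s ih =>
  obtain ⟨a, b, hb, rfl⟩ : ∃ a b, b < p ^ s ∧ q = p ^ s * a + b :=
    ⟨q / p ^ s, q % p ^ s, Nat.mod_lt _ (pow_pos hp.pos s), (Nat.div_add_mod q (p ^ s)).symm⟩
  have hpoly : C ((p : ℤ) ^ (s + 1)) ∣
      (X + 1) ^ (p * (p ^ s * a + b) + r) - (X ^ p + 1) ^ (p ^ s * a) * (X + 1) ^ (p * b + r) := by
    have hsplit : (X + 1 : ℤ[X]) ^ (p * (p ^ s * a + b) + r) =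
        ((X + 1) ^ p ^ (s + 1)) ^ a * (X + 1) ^ (p * b + r) := by
      rw [← pow_mul, ← pow_add]
      ring_nf
    have hfrob := prime_pow_succ_dvd_add_pow_sub hp (X : ℤ[X]) 1 s
    rw [one_pow] at hfrob
    rw [hsplit, pow_mul (X ^ p + 1), ← sub_mul, C_pow, C_eq_natCast]
    exact (hfrob.trans (sub_dvd_pow_sub_pow _ _ _)).mul_right _
  have hcoeff := (C_dvd_iff_dvd_coeff _ _).1 hpoly (k * p ^ (s + 1))
  rw [coeff_sub, coeff_X_add_one_pow, coeff_X_pow_add_one_pow_mul] at hcoeff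
  have hq : ((p ^ s * a + b).choose (k * p ^ s) : ℤ) =
      ((X ^ 1 + 1) ^ (p ^ s * a) * (X + 1) ^ b).coeff (k * p ^ s) := by
    rw [pow_one, ← pow_add, coeff_X_add_one_pow]
  rw [hq, coeff_X_pow_add_one_pow_mul]
  refine ((Int.modEq_iff_dvd.2 ?_).trans (Int.modEq_iff_dvd.2 hcoeff)).dvd
  rw [← Finset.sum_sub_distrib]
  refine Finset.dvd_sum fun i _ => ?_
  simp only [one_mul, coeff_X_add_one_pow, pow_succ' p s, mul_left_comm k p,
    Nat.mul_le_mul_left_iff hp.pos, ← Nat.mul_sub]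
  split_ifs with hi
  · obtain ⟨j, hj, rfl⟩ : ∃ j ≤ k * p ^ s, i = k * p ^ s - j :=
      ⟨k * p ^ s - i, Nat.sub_le _ _, (Nat.sub_sub_self hi).symm⟩
    rw [← mul_sub, Nat.sub_sub_self hj]
    exact prime_pow_succ_dvd_choose_mul_choose_sub_choose hp (dvd_mul_right _ _) hb hr hj
      fun t ht u => ih t ht u b r hr
  · simp

theorem choose_ceil_congruence_general (p m k s l : ℕ) (hp : p.Prime)
    (hl : l ≤ m * p ^ s) :
    (p : ℤ) ^ s ∣ (Nat.choose (m * p ^ s - l) (k * p ^ s) : ℤ) -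
      (Nat.choose (m * p ^ (s - 1) - (l + p - 1) / p) (k * p ^ (s - 1)) : ℤ) := by
  rcases s with _ | s
  · simp
  set c := (l + p - 1) / p
  have hlc : l + p - 1 < p * c + p := by
    simpa [mul_add] using Nat.lt_mul_div_succ (l + p - 1) hp.pos
  have hcl : p * c ≤ l + p - 1 := Nat.mul_div_le _ _
  rw [pow_succ', mul_left_comm] at hl
  have hcm : p * c ≤ p * (m * p ^ s) := Nat.mul_le_mul_left p <|
    Nat.le_of_lt_succ (Nat.lt_of_mul_lt_mul_left (a := p) (by rw [Nat.mul_succ]; omega))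
  have hsplit : m * p ^ (s + 1) - l = p * (m * p ^ s - c) + (p * c - l) := by
    rw [pow_succ', mul_left_comm, Nat.mul_sub]
    omega
  rw [Nat.add_sub_cancel, hsplit]
  exact prime_pow_succ_dvd_choose_mul_add_sub_choose hp s k _ _ (by omega)

/-- For primes `p`, integers `m ≥ 1`, `k ≥ 0`, `s ≥ 1` and `0 ≤ ℓ ≤ m·p^s`,
`binom(m·p^s − ℓ, k·p^s) ≡ binom(m·p^{s−1} − ⌈ℓ/p⌉, k·p^{s−1}) (mod p^s)`.
Here `⌈ℓ/p⌉ = (ℓ + p − 1)/p` with natural division. -/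
theorem choose_ceil_congruence (p m k s l : ℕ) (hp : p.Prime) (hm : 1 ≤ m) (hs : 1 ≤ s)
    (hl : l ≤ m * p ^ s) :
    (p : ℤ) ^ s ∣ (Nat.choose (m * p ^ s - l) (k * p ^ s) : ℤ) -
      (Nat.choose (m * p ^ (s - 1) - (l + p - 1) / p) (k * p ^ (s - 1)) : ℤ) :=
  choose_ceil_congruence_general p m k s l hp hl
end

section
/- Let p be a prime, n ≥ 1, and (a,b,c,d) ∈ U(n). If p fails to divide at least one of the 12 components of (a,b,c,d), then at least two of the four triples a = (a1,a2,a3), b = (b1,b2,b3), c = (c1,c2,c3), d = (d1,d2,d3) contain a component not divisible by p. -/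
/-- The set `U(n)` of 12-tuples `(a₁,a₂,a₃,b₁,b₂,b₃,c₁,c₂,c₃,d₁,d₂,d₃)` of nonnegative
integers, encoded as functions `Fin 12 → ℕ`, satisfying the eight linear equations. -/
def Uset (n : ℕ) : Finset (Fin 12 → ℕ) :=
  (Fintype.piFinset fun _ : Fin 12 => Finset.range (n + 1)).filter fun v =>
    v 0 + v 1 + v 2 = n ∧ v 3 + v 4 + v 5 = n ∧ v 6 + v 7 + v 8 = n ∧
    v 9 + v 10 + v 11 = n ∧ v 3 + v 6 + v 9 = n ∧ v 0 + v 4 + v 10 = n ∧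
    v 1 + v 5 + v 7 = n ∧ v 2 + v 8 + v 11 = n

private lemma key1 {p x y z n : ℕ} (h : x + y + z = n) (hy : p ∣ y) (hz : p ∣ z)
    (hn : p ∣ n) : p ∣ x := by
  have hx : x = n - (y + z) := by omega
  rw [hx]; exact Nat.dvd_sub hn (hy.add hz)

private lemma key2 {p x y z n : ℕ} (h : x + y + z = n) (hx : p ∣ x) (hz : p ∣ z)
    (hn : p ∣ n) : p ∣ y := key1 (by omega : y + x + z = n) hx hz hn

private lemma key3 {p x y z n : ℕ} (h : x + y + z = n) (hx : p ∣ x) (hy : p ∣ y)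
    (hn : p ∣ n) : p ∣ z := key1 (by omega : z + x + y = n) hx hy hn

set_option maxHeartbeats 1000000 in
/-- If `(a,b,c,d) ∈ U(n)` and some component is not divisible by `p`, then at least two
of the four triples `a`, `b`, `c`, `d` contain a component not divisible by `p`. -/
theorem two_triples_not_dvd (p n : ℕ) (hp : p.Prime) (hn : 1 ≤ n)
    (v : Fin 12 → ℕ) (hv : v ∈ Uset n) (h : ∃ i, ¬ p ∣ v i) :
    let NA := ¬ (p ∣ v 0 ∧ p ∣ v 1 ∧ p ∣ v 2)
    let NB := ¬ (p ∣ v 3 ∧ p ∣ v 4 ∧ p ∣ v 5)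
    let NC := ¬ (p ∣ v 6 ∧ p ∣ v 7 ∧ p ∣ v 8)
    let ND := ¬ (p ∣ v 9 ∧ p ∣ v 10 ∧ p ∣ v 11)
    (NA ∧ NB) ∨ (NA ∧ NC) ∨ (NA ∧ ND) ∨ (NB ∧ NC) ∨ (NB ∧ ND) ∨ (NC ∧ ND) := by
  intro NA NB NC ND
  simp only [Uset, Finset.mem_filter] at hv
  obtain ⟨-, h1, h2, h3, h4, h5, h6, h7, h8⟩ := hv
  have fromBCD : (p ∣ v 3 ∧ p ∣ v 4 ∧ p ∣ v 5) → (p ∣ v 6 ∧ p ∣ v 7 ∧ p ∣ v 8) →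
      (p ∣ v 9 ∧ p ∣ v 10 ∧ p ∣ v 11) → (p ∣ v 0 ∧ p ∣ v 1 ∧ p ∣ v 2) := by
    rintro ⟨b1, b2, b3⟩ ⟨c1, c2, c3⟩ ⟨d1, d2, d3⟩
    have hpn : p ∣ n := h5 ▸ (b1.add c1).add d1
    exact ⟨key1 h6 b2 d2 hpn, key1 h7 b3 c2 hpn, key1 h8 c3 d3 hpn⟩
  have fromACD : (p ∣ v 0 ∧ p ∣ v 1 ∧ p ∣ v 2) → (p ∣ v 6 ∧ p ∣ v 7 ∧ p ∣ v 8) →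
      (p ∣ v 9 ∧ p ∣ v 10 ∧ p ∣ v 11) → (p ∣ v 3 ∧ p ∣ v 4 ∧ p ∣ v 5) := by
    rintro ⟨a1, a2, a3⟩ ⟨c1, c2, c3⟩ ⟨d1, d2, d3⟩
    have hpn : p ∣ n := h1 ▸ (a1.add a2).add a3
    exact ⟨key1 h5 c1 d1 hpn, key2 h6 a1 d2 hpn, key2 h7 a2 c2 hpn⟩
  have fromABD : (p ∣ v 0 ∧ p ∣ v 1 ∧ p ∣ v 2) → (p ∣ v 3 ∧ p ∣ v 4 ∧ p ∣ v 5) →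
      (p ∣ v 9 ∧ p ∣ v 10 ∧ p ∣ v 11) → (p ∣ v 6 ∧ p ∣ v 7 ∧ p ∣ v 8) := by
    rintro ⟨a1, a2, a3⟩ ⟨b1, b2, b3⟩ ⟨d1, d2, d3⟩
    have hpn : p ∣ n := h1 ▸ (a1.add a2).add a3
    exact ⟨key2 h5 b1 d1 hpn, key3 h7 a2 b3 hpn, key2 h8 a3 d3 hpn⟩
  have fromABC : (p ∣ v 0 ∧ p ∣ v 1 ∧ p ∣ v 2) → (p ∣ v 3 ∧ p ∣ v 4 ∧ p ∣ v 5) →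
      (p ∣ v 6 ∧ p ∣ v 7 ∧ p ∣ v 8) → (p ∣ v 9 ∧ p ∣ v 10 ∧ p ∣ v 11) := by
    rintro ⟨a1, a2, a3⟩ ⟨b1, b2, b3⟩ ⟨c1, c2, c3⟩
    have hpn : p ∣ n := h1 ▸ (a1.add a2).add a3
    exact ⟨key3 h5 b1 c1 hpn, key3 h6 a1 b2 hpn, key3 h8 a3 c3 hpn⟩
  have notall : ¬((p ∣ v 0 ∧ p ∣ v 1 ∧ p ∣ v 2) ∧ (p ∣ v 3 ∧ p ∣ v 4 ∧ p ∣ v 5) ∧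
      (p ∣ v 6 ∧ p ∣ v 7 ∧ p ∣ v 8) ∧ (p ∣ v 9 ∧ p ∣ v 10 ∧ p ∣ v 11)) := by
    rintro ⟨⟨a1, a2, a3⟩, ⟨b1, b2, b3⟩, ⟨c1, c2, c3⟩, ⟨d1, d2, d3⟩⟩
    obtain ⟨i, hi⟩ := h
    apply hi
    fin_cases i <;> assumption
  have key : ∀ A B C D : Prop, (B → C → D → A) → (A → C → D → B) → (A → B → D → C) →
      (A → B → C → D) → ¬(A ∧ B ∧ C ∧ D) →
      (¬A ∧ ¬B) ∨ (¬A ∧ ¬C) ∨ (¬A ∧ ¬D) ∨ (¬B ∧ ¬C) ∨ (¬B ∧ ¬D) ∨ (¬C ∧ ¬D) := by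
    intro A B C D f1 f2 f3 f4 hno
    by_cases hA : A <;> by_cases hB : B <;> by_cases hC : C <;> by_cases hD : D
    · exact absurd ⟨hA, hB, hC, hD⟩ hno
    · exact absurd ⟨hA, hB, hC, f4 hA hB hC⟩ hno
    · exact absurd ⟨hA, hB, f3 hA hB hD, hD⟩ hno
    · exact Or.inr (Or.inr (Or.inr (Or.inr (Or.inr ⟨hC, hD⟩))))
    · exact absurd ⟨hA, f2 hA hC hD, hC, hD⟩ hno
    · exact Or.inr (Or.inr (Or.inr (Or.inr (Or.inl ⟨hB, hD⟩))))
    · exact Or.inr (Or.inr (Or.inr (Or.inl ⟨hB, hC⟩)))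
    · exact Or.inr (Or.inr (Or.inr (Or.inl ⟨hB, hC⟩)))
    · exact absurd ⟨f1 hB hC hD, hB, hC, hD⟩ hno
    · exact Or.inr (Or.inr (Or.inl ⟨hA, hD⟩))
    · exact Or.inr (Or.inl ⟨hA, hC⟩)
    · exact Or.inr (Or.inl ⟨hA, hC⟩)
    · exact Or.inl ⟨hA, hB⟩
    · exact Or.inl ⟨hA, hB⟩
    · exact Or.inl ⟨hA, hB⟩
    · exact Or.inl ⟨hA, hB⟩
  exact key _ _ _ _ fromBCD fromACD fromABD fromABC notall
end

section
/- Let p be a prime and M, r ≥ 1 integers. If m1, m2, m3 are nonnegative integers with m1 + m2 + m3 = M·p^r and p does not divide m_i for some i, then p^r divides the multinomial coefficient (M·p^r)! / (m1!·m2!·m3!). -/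
/-- Multinomial coefficient `n!/(x!·y!·z!)`. -/
def multi3 (n x y z : ℕ) : ℕ := n.factorial / (x.factorial * y.factorial * z.factorial)

lemma multi3_eq (a b c : ℕ) : multi3 (a + b + c) a b c = (a + b + c).choose a * (b + c).choose b := by
  unfold multi3
  have h1 : (b + c).choose b * b.factorial * c.factorial = (b + c).factorial := by
    have := Nat.choose_mul_factorial_mul_factorial (Nat.le_add_right b c)
    simpa using this
  have h2 : (a + b + c).choose a * a.factorial * (b + c).factorial = (a + b + c).factorial := by
    have := Nat.choose_mul_factorial_mul_factorial (show a ≤ a + b + c by omega)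
    have heq : a + b + c - a = b + c := by omega
    rw [heq] at this
    exact this
  have key : (a + b + c).factorial = ((a + b + c).choose a * (b + c).choose b) * (a.factorial * b.factorial * c.factorial) := by
    rw [← h2, ← h1]; ring
  rw [key, Nat.mul_div_cancel]
  positivity

lemma pow_dvd_choose_of_not_dvd (p r n k : ℕ) (hp : p.Prime) (hn : p ^ r ∣ n)
    (hk : ¬ p ∣ k) (hkn : k ≤ n) : p ^ r ∣ n.choose k := by
  have hk1 : 1 ≤ k := Nat.pos_of_ne_zero fun h0 => hk (h0 ▸ dvd_zero p)
  have hn1 : 1 ≤ n := le_trans hk1 hkn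
  have key : n * (n - 1).choose (k - 1) = n.choose k * k := by
    have := Nat.add_one_mul_choose_eq (n - 1) (k - 1)
    have h1 : n - 1 + 1 = n := by omega
    have h2 : k - 1 + 1 = k := by omega
    simpa [Nat.succ_eq_add_one, h1, h2] using this
  have hdvd : p ^ r ∣ n.choose k * k := key ▸ Dvd.dvd.mul_right hn _
  have hcop : Nat.Coprime (p ^ r) k := Nat.Coprime.pow_left _ ((Nat.Prime.coprime_iff_not_dvd hp).mpr hk)
  exact (Nat.Coprime.dvd_of_dvd_mul_right hcop hdvd)

lemma key_lemma_s10 (p M r : ℕ) (hp : p.Prime) (a b c : ℕ) (hsum : a + b + c = M * p ^ r)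
    (ha : ¬ p ∣ a) : p ^ r ∣ multi3 (M * p ^ r) a b c := by
  rw [← hsum, multi3_eq]
  have hn : p ^ r ∣ a + b + c := hsum ▸ Dvd.dvd.mul_left dvd_rfl M
  exact Dvd.dvd.mul_right (pow_dvd_choose_of_not_dvd p r _ a hp hn ha (by omega)) _

lemma multi3_comm12 (n a b c : ℕ) : multi3 n a b c = multi3 n b a c := by
  unfold multi3; ring_nf

lemma multi3_comm13 (n a b c : ℕ) : multi3 n a b c = multi3 n c b a := by
  unfold multi3; ring_nf

/-- If `m₁ + m₂ + m₃ = M·p^r` and `p` does not divide some `mᵢ`, then `p^r` divides the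
multinomial coefficient `(M·p^r)!/(m₁!·m₂!·m₃!)`. -/
theorem pow_dvd_multinomial (p M r : ℕ) (hp : p.Prime) (hM : 1 ≤ M) (hr : 1 ≤ r)
    (m1 m2 m3 : ℕ) (hsum : m1 + m2 + m3 = M * p ^ r)
    (h : ¬ p ∣ m1 ∨ ¬ p ∣ m2 ∨ ¬ p ∣ m3) :
    p ^ r ∣ multi3 (M * p ^ r) m1 m2 m3 := by
  rcases h with h1 | h2 | h3
  · exact key_lemma_s10 p M r hp m1 m2 m3 hsum h1
  · rw [multi3_comm12]
    exact key_lemma_s10 p M r hp m2 m1 m3 (by omega) h2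
  · rw [multi3_comm13]
    exact key_lemma_s10 p M r hp m3 m2 m1 (by omega) h3
end

section
/- Let p ≥ 5 be prime and m, r ≥ 1 integers. If (a,b,c,d) ∈ U(m·p^r) and at least three of the four triples a, b, c, d contain a component not divisible by p, then p^{3r} divides B(a,b,c,d). -/
/-- The summand `B(a,b,c,d) = (-1)^(a₂+b₁+d₃) · binom(n;a)·binom(n;b)·binom(n;c)·binom(n;d)`. -/
def B (n : ℕ) (v : Fin 12 → ℕ) : ℤ :=
  (-1) ^ (v 1 + v 3 + v 11) * multi3 n (v 0) (v 1) (v 2) * multi3 n (v 3) (v 4) (v 5) *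
    multi3 n (v 6) (v 7) (v 8) * multi3 n (v 9) (v 10) (v 11)

lemma multi3_eq_s11 (n x y z : ℕ) (h : x + y + z = n) :
    multi3 n x y z = n.choose x * (y + z).choose y := by
  have hx : x ≤ n := by omega
  have h1 := Nat.choose_mul_factorial_mul_factorial hx
  have h2 := Nat.choose_mul_factorial_mul_factorial (Nat.le_add_right y z)
  have hnx : n - x = y + z := by omega
  have hyz : y + z - y = z := by omega
  rw [hnx] at h1
  rw [hyz] at h2
  have key : n.factorial =
      (n.choose x * (y + z).choose y) * (x.factorial * y.factorial * z.factorial) := by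
    rw [← h1, ← h2]; ring
  rw [multi3, key, Nat.mul_div_cancel]
  exact Nat.mul_pos (Nat.mul_pos x.factorial_pos y.factorial_pos) z.factorial_pos

lemma multi3_swap12 (n x y z : ℕ) : multi3 n x y z = multi3 n y x z := by
  unfold multi3; congr 1; ring

lemma multi3_swap13 (n x y z : ℕ) : multi3 n x y z = multi3 n z y x := by
  unfold multi3; congr 1; ring

lemma pow_dvd_choose' (p r n x : ℕ) (hp : p.Prime) (hn : p ^ r ∣ n)
    (hx : ¬ p ∣ x) (hxn : x ≤ n) : p ^ r ∣ n.choose x := by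
  have hx0 : x ≠ 0 := by rintro rfl; exact hx (dvd_zero p)
  obtain ⟨x', rfl⟩ := Nat.exists_eq_succ_of_ne_zero hx0
  have hn0 : n ≠ 0 := by omega
  obtain ⟨n', rfl⟩ := Nat.exists_eq_succ_of_ne_zero hn0
  have key := Nat.add_one_mul_choose_eq n' x'
  have hdvd : p ^ r ∣ (n' + 1).choose (x' + 1) * (x' + 1) := by
    rw [← key]; exact hn.mul_right _
  have hcop : Nat.Coprime (p ^ r) (x' + 1) :=
    Nat.Coprime.pow_left r ((Nat.Prime.coprime_iff_not_dvd hp).mpr hx)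
  exact Nat.Coprime.dvd_of_dvd_mul_right hcop hdvd

lemma pow_dvd_multi3 (p r n x y z : ℕ) (hp : p.Prime) (hn : p ^ r ∣ n)
    (h : x + y + z = n) (hnd : ¬ (p ∣ x ∧ p ∣ y ∧ p ∣ z)) :
    p ^ r ∣ multi3 n x y z := by
  by_cases hx : p ∣ x
  · by_cases hy : p ∣ y
    · have hz : ¬ p ∣ z := fun hz => hnd ⟨hx, hy, hz⟩
      rw [multi3_swap13, multi3_eq_s11 n z y x (by omega)]
      exact Dvd.dvd.mul_right (pow_dvd_choose' p r n z hp hn hz (by omega)) _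
    · rw [multi3_swap12, multi3_eq_s11 n y x z (by omega)]
      exact Dvd.dvd.mul_right (pow_dvd_choose' p r n y hp hn hy (by omega)) _
  · rw [multi3_eq_s11 n x y z h]
    exact Dvd.dvd.mul_right (pow_dvd_choose' p r n x hp hn hx (by omega)) _

lemma tri_dvd (p r a b c : ℕ) (ha : p ^ r ∣ a) (hb : p ^ r ∣ b) (hc : p ^ r ∣ c) :
    (p : ℤ) ^ (3 * r) ∣ (a : ℤ) * b * c := by
  have h3 : 3 * r = r + r + r := by ring
  have : p ^ (3 * r) ∣ a * b * c := by
    rw [h3, pow_add, pow_add]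
    exact mul_dvd_mul (mul_dvd_mul ha hb) hc
  exact_mod_cast this

/-- If `(a,b,c,d) ∈ U(m·p^r)` and at least three of the four triples `a`, `b`, `c`, `d`
contain a component not divisible by `p`, then `p^{3r}` divides `B(a,b,c,d)`. -/
theorem pow_dvd_B_of_three (p m r : ℕ) (hp : p.Prime) (hp5 : 5 ≤ p)
    (hm : 1 ≤ m) (hr : 1 ≤ r) (v : Fin 12 → ℕ) (hv : v ∈ Uset (m * p ^ r))
    (h :
      let NA := ¬ (p ∣ v 0 ∧ p ∣ v 1 ∧ p ∣ v 2)
      let NB := ¬ (p ∣ v 3 ∧ p ∣ v 4 ∧ p ∣ v 5)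
      let NC := ¬ (p ∣ v 6 ∧ p ∣ v 7 ∧ p ∣ v 8)
      let ND := ¬ (p ∣ v 9 ∧ p ∣ v 10 ∧ p ∣ v 11)
      (NA ∧ NB ∧ NC) ∨ (NA ∧ NB ∧ ND) ∨ (NA ∧ NC ∧ ND) ∨ (NB ∧ NC ∧ ND)) :
    (p : ℤ) ^ (3 * r) ∣ B (m * p ^ r) v := by
  have h' :
      (¬ (p ∣ v 0 ∧ p ∣ v 1 ∧ p ∣ v 2) ∧ ¬ (p ∣ v 3 ∧ p ∣ v 4 ∧ p ∣ v 5) ∧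
        ¬ (p ∣ v 6 ∧ p ∣ v 7 ∧ p ∣ v 8)) ∨
      (¬ (p ∣ v 0 ∧ p ∣ v 1 ∧ p ∣ v 2) ∧ ¬ (p ∣ v 3 ∧ p ∣ v 4 ∧ p ∣ v 5) ∧
        ¬ (p ∣ v 9 ∧ p ∣ v 10 ∧ p ∣ v 11)) ∨
      (¬ (p ∣ v 0 ∧ p ∣ v 1 ∧ p ∣ v 2) ∧ ¬ (p ∣ v 6 ∧ p ∣ v 7 ∧ p ∣ v 8) ∧
        ¬ (p ∣ v 9 ∧ p ∣ v 10 ∧ p ∣ v 11)) ∨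
      (¬ (p ∣ v 3 ∧ p ∣ v 4 ∧ p ∣ v 5) ∧ ¬ (p ∣ v 6 ∧ p ∣ v 7 ∧ p ∣ v 8) ∧
        ¬ (p ∣ v 9 ∧ p ∣ v 10 ∧ p ∣ v 11)) := h
  clear h
  rw [Uset, Finset.mem_filter] at hv
  obtain ⟨-, h1, h2, h3, h4, -, -, -, -⟩ := hv
  set n := m * p ^ r with hn
  have hpr : p ^ r ∣ n := dvd_mul_left _ m
  rcases h' with ⟨hA, hB, hC⟩ | ⟨hA, hB, hD⟩ | ⟨hA, hC, hD⟩ | ⟨hB, hC, hD⟩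
  · refine dvd_trans
      (tri_dvd p r _ _ _ (pow_dvd_multi3 p r n _ _ _ hp hpr h1 hA)
        (pow_dvd_multi3 p r n _ _ _ hp hpr h2 hB)
        (pow_dvd_multi3 p r n _ _ _ hp hpr h3 hC))
      ⟨(-1) ^ (v 1 + v 3 + v 11) * multi3 n (v 9) (v 10) (v 11), ?_⟩
    unfold B; ring
  · refine dvd_trans
      (tri_dvd p r _ _ _ (pow_dvd_multi3 p r n _ _ _ hp hpr h1 hA)
        (pow_dvd_multi3 p r n _ _ _ hp hpr h2 hB)
        (pow_dvd_multi3 p r n _ _ _ hp hpr h4 hD))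
      ⟨(-1) ^ (v 1 + v 3 + v 11) * multi3 n (v 6) (v 7) (v 8), ?_⟩
    unfold B; ring
  · refine dvd_trans
      (tri_dvd p r _ _ _ (pow_dvd_multi3 p r n _ _ _ hp hpr h1 hA)
        (pow_dvd_multi3 p r n _ _ _ hp hpr h3 hC)
        (pow_dvd_multi3 p r n _ _ _ hp hpr h4 hD))
      ⟨(-1) ^ (v 1 + v 3 + v 11) * multi3 n (v 3) (v 4) (v 5), ?_⟩
    unfold B; ring
  · refine dvd_trans
      (tri_dvd p r _ _ _ (pow_dvd_multi3 p r n _ _ _ hp hpr h2 hB)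
        (pow_dvd_multi3 p r n _ _ _ hp hpr h3 hC)
        (pow_dvd_multi3 p r n _ _ _ hp hpr h4 hD))
      ⟨(-1) ^ (v 1 + v 3 + v 11) * multi3 n (v 0) (v 1) (v 2), ?_⟩
    unfold B; ring
end

section
/- Let p be a prime and m, r ≥ 1 integers. Then the six sums Σ_{(a,b,c,d) ∈ U_{ab}(m·p^r)} B(a,b,c,d), Σ_{(a,b,c,d) ∈ U_{ac}(m·p^r)} B(a,b,c,d), Σ_{(a,b,c,d) ∈ U_{ad}(m·p^r)} B(a,b,c,d), Σ_{(a,b,c,d) ∈ U_{bc}(m·p^r)} B(a,b,c,d), Σ_{(a,b,c,d) ∈ U_{bd}(m·p^r)} B(a,b,c,d), and Σ_{(a,b,c,d) ∈ U_{cd}(m·p^r)} B(a,b,c,d) are all equal. -/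
theorem Finset.sum_filter_eq_of_involutive {α M : Type*} [AddCommMonoid M] {s : Finset α}
    {f : α → M} {P Q : α → Prop} [DecidablePred P] [DecidablePred Q] {g : α → α}
    (hg : Function.Involutive g) (hs : ∀ x ∈ s, g x ∈ s) (hf : ∀ x ∈ s, f (g x) = f x)
    (hPQ : ∀ x, P (g x) ↔ Q x) :
    ∑ x ∈ s.filter P, f x = ∑ x ∈ s.filter Q, f x := by
  refine Finset.sum_nbij' g g (fun x hx => ?_) (fun x hx => ?_) (fun x _ => hg x)
    (fun x _ => hg x) (fun x hx => (hf x (Finset.mem_filter.1 hx).1).symm)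
  · simp only [Finset.mem_filter] at hx ⊢
    exact ⟨hs x hx.1, (hPQ (g x)).1 (by rw [hg x]; exact hx.2)⟩
  · simp only [Finset.mem_filter] at hx ⊢
    exact ⟨hs x hx.1, (hPQ x).2 hx.2⟩

lemma mem_Uset {n : ℕ} {v : Fin 12 → ℕ} : v ∈ Uset n ↔ (∀ i, v i ≤ n) ∧
    v 0 + v 1 + v 2 = n ∧ v 3 + v 4 + v 5 = n ∧ v 6 + v 7 + v 8 = n ∧
    v 9 + v 10 + v 11 = n ∧ v 3 + v 6 + v 9 = n ∧ v 0 + v 4 + v 10 = n ∧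
    v 1 + v 5 + v 7 = n ∧ v 2 + v 8 + v 11 = n := by
  simp [Uset, Fintype.mem_piFinset]

lemma multi3_swap_left (n x y z : ℕ) : multi3 n y x z = multi3 n x y z := by
  rw [multi3, multi3, mul_comm y.factorial]

lemma multi3_swap_right (n x y z : ℕ) : multi3 n x z y = multi3 n x y z := by
  rw [multi3, multi3, mul_right_comm]

structure IsUsetSymmetry (π : Fin 12 → Fin 12) : Prop where
  involutive : Function.Involutive π
  comp_mem_Uset {n : ℕ} {v : Fin 12 → ℕ} : v ∈ Uset n → v ∘ π ∈ Uset n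
  B_comp {n : ℕ} {v : Fin 12 → ℕ} : v ∈ Uset n → B n (v ∘ π) = B n v

theorem IsUsetSymmetry.sum_filter_eq {π : Fin 12 → Fin 12} (hπ : IsUsetSymmetry π) {n : ℕ}
    {P Q : (Fin 12 → ℕ) → Prop} [DecidablePred P] [DecidablePred Q]
    (hPQ : ∀ v, P (v ∘ π) ↔ Q v) :
    ∑ v ∈ (Uset n).filter P, B n v = ∑ v ∈ (Uset n).filter Q, B n v :=
  Finset.sum_filter_eq_of_involutive (g := (· ∘ π))
    (fun v => funext fun i => congrArg v (hπ.involutive i))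
    (fun _ => hπ.comp_mem_Uset) (fun _ => hπ.B_comp) hPQ

-- `v ∘ swapAC` is `v` with `a` and `c` exchanged in both indices of `M`; likewise below.
def swapAC : Fin 12 → Fin 12 := ![6, 7, 8, 4, 3, 5, 0, 1, 2, 10, 9, 11]

def swapBC : Fin 12 → Fin 12 := ![2, 1, 0, 6, 8, 7, 3, 5, 4, 9, 11, 10]

def swapCD : Fin 12 → Fin 12 := ![1, 0, 2, 3, 5, 4, 9, 10, 11, 6, 7, 8]

theorem isUsetSymmetry_swapAC : IsUsetSymmetry swapAC where
  involutive := by unfold Function.Involutive; decide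
  comp_mem_Uset {n v} hv := by
    obtain ⟨hle, h⟩ := mem_Uset.1 hv
    refine mem_Uset.2 ⟨fun i => hle _, ?_⟩
    simp only [Function.comp_apply, swapAC, Matrix.cons_val]
    omega
  B_comp {n v} hv := by
    obtain ⟨-, h⟩ := mem_Uset.1 hv
    have hsign : (-1 : ℤ) ^ (v 7 + v 4 + v 11) = (-1) ^ (v 1 + v 3 + v 11) :=
      neg_one_pow_congr (by simp only [Nat.even_iff]; omega)
    simp only [B, Function.comp_apply, swapAC, Matrix.cons_val, hsign, multi3_swap_left]
    ring

theorem isUsetSymmetry_swapBC : IsUsetSymmetry swapBC where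
  involutive := by unfold Function.Involutive; decide
  comp_mem_Uset {n v} hv := by
    obtain ⟨hle, h⟩ := mem_Uset.1 hv
    refine mem_Uset.2 ⟨fun i => hle _, ?_⟩
    simp only [Function.comp_apply, swapBC, Matrix.cons_val]
    omega
  B_comp {n v} hv := by
    obtain ⟨-, h⟩ := mem_Uset.1 hv
    have hsign : (-1 : ℤ) ^ (v 1 + v 6 + v 10) = (-1) ^ (v 1 + v 3 + v 11) :=
      neg_one_pow_congr (by simp only [Nat.even_iff]; omega)
    simp only [B, Function.comp_apply, swapBC, Matrix.cons_val, hsign, multi3_swap_left,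
      multi3_swap_right]
    ring

theorem isUsetSymmetry_swapCD : IsUsetSymmetry swapCD where
  involutive := by unfold Function.Involutive; decide
  comp_mem_Uset {n v} hv := by
    obtain ⟨hle, h⟩ := mem_Uset.1 hv
    refine mem_Uset.2 ⟨fun i => hle _, ?_⟩
    simp only [Function.comp_apply, swapCD, Matrix.cons_val]
    omega
  B_comp {n v} hv := by
    obtain ⟨-, h⟩ := mem_Uset.1 hv
    have hsign : (-1 : ℤ) ^ (v 0 + v 3 + v 8) = (-1) ^ (v 1 + v 3 + v 11) :=
      neg_one_pow_congr (by simp only [Nat.even_iff]; omega)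
    simp only [B, Function.comp_apply, swapCD, Matrix.cons_val, hsign, multi3_swap_left,
      multi3_swap_right]
    ring

theorem six_sums_equal_general (p m r : ℕ) :
    let n := m * p ^ r
    let NA := fun v : Fin 12 → ℕ => ¬ (p ∣ v 0 ∧ p ∣ v 1 ∧ p ∣ v 2)
    let NB := fun v : Fin 12 → ℕ => ¬ (p ∣ v 3 ∧ p ∣ v 4 ∧ p ∣ v 5)
    let NC := fun v : Fin 12 → ℕ => ¬ (p ∣ v 6 ∧ p ∣ v 7 ∧ p ∣ v 8)
    let ND := fun v : Fin 12 → ℕ => ¬ (p ∣ v 9 ∧ p ∣ v 10 ∧ p ∣ v 11)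
    let Sab := ∑ v ∈ (Uset n).filter (fun v => NA v ∧ NB v), B n v
    let Sac := ∑ v ∈ (Uset n).filter (fun v => NA v ∧ NC v), B n v
    let Sad := ∑ v ∈ (Uset n).filter (fun v => NA v ∧ ND v), B n v
    let Sbc := ∑ v ∈ (Uset n).filter (fun v => NB v ∧ NC v), B n v
    let Sbd := ∑ v ∈ (Uset n).filter (fun v => NB v ∧ ND v), B n v
    let Scd := ∑ v ∈ (Uset n).filter (fun v => NC v ∧ ND v), B n v
    Sab = Sac ∧ Sab = Sad ∧ Sab = Sbc ∧ Sab = Sbd ∧ Sab = Scd := by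
  intro n NA NB NC ND Sab Sac Sad Sbc Sbd Scd
  have hab_ac : Sab = Sac := isUsetSymmetry_swapBC.sum_filter_eq fun v => by
    simp only [NA, NB, NC, Function.comp_apply, swapBC, Matrix.cons_val]; tauto
  have hac_ad : Sac = Sad := isUsetSymmetry_swapCD.sum_filter_eq fun v => by
    simp only [NA, NC, ND, Function.comp_apply, swapCD, Matrix.cons_val]; tauto
  have hab_bc : Sab = Sbc := isUsetSymmetry_swapAC.sum_filter_eq fun v => by
    simp only [NA, NB, NC, Function.comp_apply, swapAC, Matrix.cons_val]; tauto
  have hbc_bd : Sbc = Sbd := isUsetSymmetry_swapCD.sum_filter_eq fun v => by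
    simp only [NB, NC, ND, Function.comp_apply, swapCD, Matrix.cons_val]; tauto
  have had_cd : Sad = Scd := isUsetSymmetry_swapAC.sum_filter_eq fun v => by
    simp only [NA, NC, ND, Function.comp_apply, swapAC, Matrix.cons_val]; tauto
  exact ⟨hab_ac, hab_ac.trans hac_ad, hab_bc, hab_bc.trans hbc_bd,
    (hab_ac.trans hac_ad).trans had_cd⟩

/-- The six sums of `B` over the sets `U_{xy}(m·p^r)` for distinct `x, y ∈ {a,b,c,d}`
are all equal. -/
theorem six_sums_equal (p m r : ℕ) (hp : p.Prime) (hm : 1 ≤ m) (hr : 1 ≤ r) :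
    let n := m * p ^ r
    let NA := fun v : Fin 12 → ℕ => ¬ (p ∣ v 0 ∧ p ∣ v 1 ∧ p ∣ v 2)
    let NB := fun v : Fin 12 → ℕ => ¬ (p ∣ v 3 ∧ p ∣ v 4 ∧ p ∣ v 5)
    let NC := fun v : Fin 12 → ℕ => ¬ (p ∣ v 6 ∧ p ∣ v 7 ∧ p ∣ v 8)
    let ND := fun v : Fin 12 → ℕ => ¬ (p ∣ v 9 ∧ p ∣ v 10 ∧ p ∣ v 11)
    let Sab := ∑ v ∈ (Uset n).filter (fun v => NA v ∧ NB v), B n v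
    let Sac := ∑ v ∈ (Uset n).filter (fun v => NA v ∧ NC v), B n v
    let Sad := ∑ v ∈ (Uset n).filter (fun v => NA v ∧ ND v), B n v
    let Sbc := ∑ v ∈ (Uset n).filter (fun v => NB v ∧ NC v), B n v
    let Sbd := ∑ v ∈ (Uset n).filter (fun v => NB v ∧ ND v), B n v
    let Scd := ∑ v ∈ (Uset n).filter (fun v => NC v ∧ ND v), B n v
    Sab = Sac ∧ Sab = Sad ∧ Sab = Sbc ∧ Sab = Sbd ∧ Sab = Scd :=
  six_sums_equal_general p m r
end
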